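/- arXiv:2001.05768 — 3 statements merged into one kernel-verified Lean document; each statement's English description precedes it below -/
import Mathlib

section
/- If X is a Banach space and f : X → ℝ is a C¹ convex function, and a sequence (xₙ) converges weakly to x with ‖∇f(xₙ)‖ → 0, then ∇f(x) = 0 (i.e., convex C¹ functions satisfy Condition C). -/
open Filter NormedSpace

/-- Weak convergence of a sequence in a Banach space. -/
def WeakConv {X : Type*} [NormedAddCommGroup X] [NormedSpace ℝ X]
    (x : ℕ → X) (a : X) : Prop :=
  ∀ h : StrongDual ℝ X, Tendsto (fun n => h (x n)) atTop (nhds (h a))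

/-- Convex C¹ functions satisfy Condition C. -/
theorem convex_satisfies_conditionC
    {X : Type*} [NormedAddCommGroup X] [NormedSpace ℝ X] [CompleteSpace X]
    (f : X → ℝ) (f' : X → StrongDual ℝ X)
    (hdiff : ∀ x, HasFDerivAt f (f' x) x)
    (hcont : Continuous f')
    (hconv : ∀ x y : X, f x + f' x (y - x) ≤ f y)
    (x : ℕ → X) (a : X)
    (hweak : WeakConv x a)
    (hgrad : Tendsto (fun n => ‖f' (x n)‖) atTop (nhds 0)) :
    f' a = 0 := by
  -- Step 1: the sequence is bounded (uniform boundedness principle).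
  obtain ⟨C, hC⟩ : ∃ C, ∀ n, ‖x n‖ ≤ C := by
    have hb : ∀ h : StrongDual ℝ X, ∃ M, ∀ n,
        ‖(inclusionInDoubleDual ℝ X (x n)) h‖ ≤ M := by
      intro h
      have := (hweak h).norm.bddAbove_range
      obtain ⟨M, hM⟩ := this
      exact ⟨M, fun n => hM ⟨n, rfl⟩⟩
    obtain ⟨C, hC⟩ := banach_steinhaus hb
    refine ⟨C, fun n => ?_⟩
    have := (inclusionInDoubleDualLi ℝ (E := X)).norm_map (x n)
    calc ‖x n‖ = ‖inclusionInDoubleDual ℝ X (x n)‖ := this.symm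
      _ ≤ C := hC n
  -- Step 2: f a ≤ f y for all y.
  have hmin : ∀ y, f a ≤ f y := by
    intro y
    have key : ∀ n, f a + f' a (x n - a) + f' (x n) (y - x n) ≤ f y := by
      intro n
      have h1 := hconv a (x n)
      have h2 := hconv (x n) y
      linarith
    have t1 : Tendsto (fun n => f' a (x n - a)) atTop (nhds 0) := by
      have := (hweak (f' a)).sub_const (f' a a)
      simpa [map_sub] using this
    have t2 : Tendsto (fun n => f' (x n) (y - x n)) atTop (nhds 0) := by
      have hbound : ∀ n, ‖f' (x n) (y - x n)‖ ≤ ‖f' (x n)‖ * (‖y‖ + C) := by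
        intro n
        calc ‖f' (x n) (y - x n)‖ ≤ ‖f' (x n)‖ * ‖y - x n‖ :=
              (f' (x n)).le_opNorm _
          _ ≤ ‖f' (x n)‖ * (‖y‖ + C) := by
              gcongr
              calc ‖y - x n‖ ≤ ‖y‖ + ‖x n‖ := norm_sub_le _ _
                _ ≤ ‖y‖ + C := by linarith [hC n]
      have hto : Tendsto (fun n => ‖f' (x n)‖ * (‖y‖ + C)) atTop (nhds 0) := by
        simpa using hgrad.mul_const (‖y‖ + C)
      have := squeeze_zero_norm hbound hto
      exact this
    have tsum : Tendsto (fun n => f a + f' a (x n - a) + f' (x n) (y - x n))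
        atTop (nhds (f a)) := by
      have := ((tendsto_const_nhds (x := f a) (f := atTop)).add t1).add t2
      simpa using this
    exact le_of_tendsto tsum (Eventually.of_forall key)
  -- Step 3: global minimum implies zero derivative.
  have : IsLocalMin f a := Eventually.of_forall fun y => hmin y
  exact this.hasFDerivAt_eq_zero (hdiff a)
end

section
/- A countable union of shy Borel subsets of a Banach space X is shy, and the complement of a shy set is dense in X. -/
open MeasureTheory

/-- A Borel set in a Banach space is shy if some Borel measure, positive and finite on a
compact set, vanishes on all its translates. -/
def Shy {X : Type*} [NormedAddCommGroup X] [NormedSpace ℝ X]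
    [MeasurableSpace X] [BorelSpace X] (S : Set X) : Prop :=
  ∃ μ : Measure X, (∃ U : Set X, IsCompact U ∧ 0 < μ U ∧ μ U < ⊤) ∧
    ∀ x : X, μ ((x + ·) '' S) = 0

/-!
A measure that charges a compact set charges a small ball inside it, and a translate of that
ball lies in any given open set; so no shy set contains an open set.

For a countable union, restrict the witness for each `Sₙ` to a ball of radius `2⁻ⁿ`, normalise
it, and translate it to a probability measure `νₙ` carried by a compact set `Kₙ` near `0`.
Take independent `Yₙ ∼ νₙ` (the product measure on `∏ₙ Kₙ`); then `∑ₙ Yₙ` converges and its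
law `μ` is carried by a compact set. For each `n`, `Yₙ` is independent of `∑_{m ≠ n} Yₘ`, so
`μ` is the convolution of `νₙ` with another probability measure, and therefore, like `νₙ`,
it vanishes on every translate of `Sₙ`.
-/

open Set Metric ProbabilityTheory

lemma IsCompact.exists_measure_inter_ball_ne_zero {X : Type*} [PseudoMetricSpace X]
    [MeasurableSpace X] {μ : Measure X} {U : Set X} (hU : IsCompact U) (hμU : μ U ≠ 0)
    {ε : ℝ} (hε : 0 < ε) : ∃ c, μ (U ∩ ball c ε) ≠ 0 := by
  obtain ⟨t, -, ht, hUt⟩ := hU.finite_cover_balls hε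
  by_contra! h
  refine hμU (measure_mono_null (fun u hu => ?_) ((measure_biUnion_null_iff ht.countable).2
    fun c _ => h c))
  obtain ⟨c, hc, huc⟩ := mem_iUnion₂.1 (hUt hu)
  exact mem_iUnion₂.2 ⟨c, hc, hu, huc⟩

theorem MeasureTheory.Measure.conv_preimage_add_eq_zero {G : Type*} [AddCommGroup G]
    [MeasurableSpace G] [MeasurableAdd₂ G] {ν : Measure G} [SFinite ν] {S : Set G}
    (hS : MeasurableSet S) (hν : ∀ x, ν ((x + ·) ⁻¹' S) = 0) (ρ : Measure G) [SFinite ρ]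
    (x : G) : (ν ∗ ρ) ((x + ·) ⁻¹' S) = 0 := by
  have hxS : MeasurableSet ((x + ·) ⁻¹' S) := measurable_const_add x hS
  rw [Measure.conv, Measure.map_apply measurable_add hxS,
    Measure.prod_apply_symm (measurable_add hxS)]
  simp only [preimage_preimage]
  convert lintegral_zero with y
  simpa only [add_left_comm x, add_comm _ y, ← add_assoc] using hν (x + y)

theorem ProbabilityTheory.indepFun_infinitePi_eval_compl {ι : Type*} {Ω : ι → Type*}
    [∀ i, MeasurableSpace (Ω i)] (P : ∀ i, Measure (Ω i)) [∀ i, IsProbabilityMeasure (P i)]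
    (i : ι) :
    IndepFun (fun ω => ω i) (fun ω (j : ({i}ᶜ : Set ι)) => ω j) (Measure.infinitePi P) := by
  have hindep := (iIndepFun_infinitePi (P := P) (X := fun _ => id)
    fun _ => measurable_id).iIndep
  have := indep_iSup_of_disjoint (fun j => (measurable_pi_apply j).comap_le) hindep
    (disjoint_compl_right (a := ({i} : Set ι)))
  rw [IndepFun_iff_Indep]
  refine indep_of_indep_of_le this (le_iSup₂_of_le i rfl le_rfl) ?_
  rw [MeasurableSpace.pi, MeasurableSpace.comap_iSup]
  refine iSup_le fun j => ?_
  rw [MeasurableSpace.comap_comp]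
  exact le_iSup₂_of_le j.1 j.2 le_rfl

section SubsetClosedBall

variable {X : Type*} [NormedAddCommGroup X] [CompleteSpace X] {ι : Type*} {K : ι → Set X}
  {ε : ι → ℝ}

lemma summable_coe_of_subset_closedBall (hε : Summable ε) (hK : ∀ i, K i ⊆ closedBall 0 (ε i))
    (ω : ∀ i, K i) : Summable fun i => (ω i : X) :=
  hε.of_norm_bounded fun i => mem_closedBall_zero_iff.1 (hK i (ω i).2)

lemma continuous_tsum_coe_of_subset_closedBall (hε : Summable ε)
    (hK : ∀ i, K i ⊆ closedBall 0 (ε i)) : Continuous fun ω : (∀ i, K i) => ∑' i, (ω i : X) :=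
  continuous_tsum (fun i => continuous_subtype_val.comp (continuous_apply i)) hε
    fun i ω => mem_closedBall_zero_iff.1 (hK i (ω i).2)

variable [MeasurableSpace X] [BorelSpace X] [SecondCountableTopology X] [Countable ι]

lemma map_infinitePi_tsum_eq_conv (hε : Summable ε) (hK : ∀ i, K i ⊆ closedBall 0 (ε i))
    (μ : ∀ i, Measure (K i)) [∀ i, IsProbabilityMeasure (μ i)] (i : ι) :
    (Measure.infinitePi μ).map (fun ω => ∑' j, (ω j : X)) =
      (μ i).map (↑) ∗ (Measure.infinitePi μ).map (fun ω => ∑' j : ↥({i}ᶜ : Set ι), (ω j : X)) := by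
  have hsplit : (fun ω : ∀ j, K j => ∑' j, (ω j : X)) =
      (fun ω => (ω i : X)) + fun ω => ∑' j : ↥({i}ᶜ : Set ι), (ω j : X) := by
    ext ω
    have hω := summable_coe_of_subset_closedBall hε hK ω
    rw [Pi.add_apply, ← Summable.tsum_add_tsum_compl (f := fun j => (ω j : X)) (s := {i})
      (hω.subtype _) (hω.subtype _), tsum_singleton i fun j => (ω j : X)]
  have hrest : Measurable fun η : ∀ j : ↥({i}ᶜ : Set ι), K j => ∑' j, (η j : X) :=
    (continuous_tsum_coe_of_subset_closedBall (hε.subtype _) fun j => hK j).measurable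
  have hindep : IndepFun (fun ω : ∀ j, K j => (ω i : X))
      (fun ω => ∑' j : ↥({i}ᶜ : Set ι), (ω j : X)) (Measure.infinitePi μ) :=
    (indepFun_infinitePi_eval_compl μ i).comp measurable_subtype_coe hrest
  have hfirst : Measurable fun ω : ∀ j, K j => (ω i : X) :=
    measurable_subtype_coe.comp (measurable_pi_apply i)
  have hrest' : Measurable fun ω : ∀ j, K j => ∑' j : ↥({i}ᶜ : Set ι), (ω j : X) :=
    hrest.comp (measurable_pi_lambda _ fun j => measurable_pi_apply _)
  rw [hsplit, hindep.map_add_eq_map_conv_map hfirst hrest', ← Measure.infinitePi_map_eval μ i,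
    Measure.map_map measurable_subtype_coe (measurable_pi_apply i)]
  rfl

end SubsetClosedBall

section Shy

variable {X : Type*} [NormedAddCommGroup X] [NormedSpace ℝ X] [MeasurableSpace X] [BorelSpace X]

lemma shy_iff_preimage {S : Set X} :
    Shy S ↔ ∃ μ : Measure X, (∃ U : Set X, IsCompact U ∧ 0 < μ U ∧ μ U < ⊤) ∧
      ∀ x : X, μ ((x + ·) ⁻¹' S) = 0 := by
  simp only [Shy, image_add_left]
  refine exists_congr fun μ => and_congr_right fun _ => ⟨fun h x => ?_, fun h x => h _⟩
  simpa using h (-x)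

lemma Shy.dense_compl {S : Set X} (hS : Shy S) : Dense Sᶜ := by
  obtain ⟨μ, ⟨U, hU, hμU, -⟩, hμS⟩ := shy_iff_preimage.1 hS
  refine dense_iff_inter_open.2 fun V hV ⟨v, hv⟩ => not_subset.1 fun hVS => ?_
  obtain ⟨r, hr, hvr⟩ := isOpen_iff.1 hV v hv
  obtain ⟨c, hc⟩ := hU.exists_measure_inter_ball_ne_zero hμU.ne' hr
  have hsub : U ∩ ball c r ⊆ (v - c + ·) ⁻¹' S := fun y hy => hVS <| hvr <| by
    rw [mem_ball, dist_eq_norm, show v - c + y - v = y - c by abel, ← dist_eq_norm]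
    exact hy.2
  exact hc (measure_mono_null hsub (hμS (v - c)))

lemma Shy.exists_isProbabilityMeasure_closedBall {S : Set X} (hS : Shy S) {ε : ℝ} (hε : 0 < ε) :
    ∃ (ν : Measure X) (K : Set X), IsProbabilityMeasure ν ∧ IsCompact K ∧
      K ⊆ closedBall 0 ε ∧ ν K = 1 ∧ ∀ x, ν ((x + ·) ⁻¹' S) = 0 := by
  obtain ⟨μ, ⟨U, hU, hμU, hμU_fin⟩, hμS⟩ := shy_iff_preimage.1 hS
  obtain ⟨c, hc⟩ := hU.exists_measure_inter_ball_ne_zero hμU.ne' hε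
  set A := U ∩ closedBall c ε
  have hA : IsCompact A := hU.inter_right isClosed_closedBall
  have hμA : μ A ≠ 0 := fun h =>
    hc (measure_mono_null (inter_subset_inter_right U ball_subset_closedBall) h)
  have hμA_fin : μ A ≠ ⊤ := ((measure_mono inter_subset_left).trans_lt hμU_fin).ne
  have := cond_isProbabilityMeasure_of_finite hμA hμA_fin
  set e := MeasurableEquiv.subRight c
  have he : ∀ y, e y = y - c := fun _ => rfl
  refine ⟨(μ[|A]).map e, e '' A, Measure.isProbabilityMeasure_map e.measurable.aemeasurable,
    hA.image (continuous_sub_right c), ?_, ?_, fun x => ?_⟩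
  · rintro _ ⟨a, ⟨-, ha⟩, rfl⟩
    rwa [mem_closedBall, dist_eq_norm, he, sub_zero, ← dist_eq_norm]
  · rw [e.map_apply, e.preimage_image, cond_apply_self hμA hμA_fin]
  · rw [e.map_apply]
    exact cond_absolutelyContinuous (hμS (x - c)) |> measure_mono_null fun y hy => by
      simpa only [mem_preimage, he, add_sub_assoc', sub_add_eq_add_sub] using hy

theorem Shy.iUnion [CompleteSpace X] [TopologicalSpace.SeparableSpace X] {S : ℕ → Set X}
    (hSm : ∀ n, MeasurableSet (S n)) (hS : ∀ n, Shy (S n)) : Shy (⋃ n, S n) := by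
  choose ν K _ hK hKε hνK hνS using fun n =>
    (hS n).exists_isProbabilityMeasure_closedBall (pow_pos (one_half_pos (α := ℝ)) n)
  have (n : ℕ) : CompactSpace (K n) := isCompact_iff_compactSpace.1 (hK n)
  -- On `∏ₙ Kₙ`, rather than `ℕ → X`, the series `σ` converges everywhere and is continuous.
  let ν' (n : ℕ) : Measure (K n) := (ν n).comap (↑)
  have (n : ℕ) : IsProbabilityMeasure (ν' n) :=
    ⟨by rw [comap_subtype_coe_apply (hK n).measurableSet, image_univ, Subtype.range_coe, hνK n]⟩
  have hν'_map (n : ℕ) : (ν' n).map (↑) = ν n := by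
    rw [map_comap_subtype_coe (hK n).measurableSet, Measure.restrict_eq_self_of_ae_mem]
    exact (mem_ae_iff_prob_eq_one (hK n).measurableSet).2 (hνK n)
  have hgeom : Summable fun n : ℕ => (1 / 2 : ℝ) ^ n := summable_geometric_two
  set σ := fun ω : (∀ n, K n) => ∑' n, (ω n : X)
  have hσ : Continuous σ := continuous_tsum_coe_of_subset_closedBall hgeom hKε
  refine shy_iff_preimage.2
    ⟨(Measure.infinitePi ν').map σ, ⟨range σ, isCompact_range hσ, ?_⟩, fun x => ?_⟩
  · rw [Measure.map_apply hσ.measurable (isCompact_range hσ).measurableSet, preimage_range,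
      measure_univ]
    exact ⟨one_pos, ENNReal.one_lt_top⟩
  rw [preimage_iUnion]
  refine measure_iUnion_null fun n => ?_
  rw [map_infinitePi_tsum_eq_conv hgeom hKε ν' n, hν'_map]
  exact Measure.conv_preimage_add_eq_zero (hSm n) (hνS n) _ x

end Shy

/-- A countable union of shy Borel subsets of a separable Banach space is shy, and the
complement of a shy set is dense. -/
theorem countable_union_shy_and_complement_dense
    {X : Type*} [NormedAddCommGroup X] [NormedSpace ℝ X] [CompleteSpace X]
    [TopologicalSpace.SeparableSpace X] [MeasurableSpace X] [BorelSpace X] :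
    (∀ S : ℕ → Set X, (∀ n, MeasurableSet (S n)) → (∀ n, Shy (S n)) →
        Shy (⋃ n, S n)) ∧
      ∀ S : Set X, MeasurableSet S → Shy S → Dense Sᶜ :=
  ⟨fun _ hSm hS => Shy.iUnion hSm hS, fun _ _ hS => hS.dense_compl⟩
end

section
/- Let X be a finite-dimensional normed real vector space. Then a Borel set S ⊂ X is shy if and only if S has Lebesgue measure zero. -/
/-!
A witness `ν` of shyness, restricted to its compact set, is a nonzero finite measure killing
every translate of `S`. Compute the `μ × ν` measure of `{(x, y) | x + y ∈ S}` slice by slice in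
both orders: the slices at fixed `x` are translates of `S`, so it is `0`; the slices at fixed
`y` are translates of `S` too, of `μ`-measure `μ S` by invariance, so it is `μ S * ν univ`.
Conversely a Haar measure is itself a witness of shyness for each of its null sets.
-/

open MeasureTheory

open Measure

theorem measure_eq_zero_of_forall_measure_image_add_left_eq_zero {G : Type*} [AddGroup G]
    [MeasurableSpace G] [MeasurableAdd₂ G] (μ ν : Measure G) [SFinite μ] [SFinite ν]
    [μ.IsAddRightInvariant] (hν : ν ≠ 0) {S : Set G} (hS : MeasurableSet S)
    (h : ∀ x, ν ((x + ·) '' S) = 0) : μ S = 0 := by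
  have hT : MeasurableSet {p : G × G | p.1 + p.2 ∈ S} := measurable_add hS
  have slice_left : μ.prod ν {p | p.1 + p.2 ∈ S} = 0 := by
    have (x : G) : ν (Prod.mk x ⁻¹' {p | p.1 + p.2 ∈ S}) = 0 := by
      have := h (-x)
      rwa [Set.image_add_left, neg_neg] at this
    rw [prod_apply hT, lintegral_congr this, lintegral_zero]
  have slice_right : μ.prod ν {p | p.1 + p.2 ∈ S} = μ S * ν Set.univ := by
    have (y : G) : μ ((·, y) ⁻¹' {p | p.1 + p.2 ∈ S}) = μ S := measure_preimage_add_right μ y S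
    rw [prod_apply_symm hT, lintegral_congr this, lintegral_const]
  have : μ S * ν Set.univ = 0 := slice_right ▸ slice_left
  exact (mul_eq_zero.1 this).resolve_right (measure_univ_eq_zero.not.2 hν)

theorem shy_of_measure_eq_zero {X : Type*} [NormedAddCommGroup X] [NormedSpace ℝ X]
    [ProperSpace X] [MeasurableSpace X] [BorelSpace X] (μ : Measure X) [μ.IsAddHaarMeasure]
    {S : Set X} (hS : μ S = 0) : Shy S := by
  refine ⟨μ, ⟨Metric.closedBall 0 1, isCompact_closedBall 0 1,
    Metric.measure_closedBall_pos μ 0 one_pos, (isCompact_closedBall 0 1).measure_lt_top⟩,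
    fun x ↦ ?_⟩
  rw [Set.image_add_left, measure_preimage_add, hS]

/-- In a finite-dimensional normed real vector space, a Borel set is shy iff it has
Lebesgue (Haar) measure zero. -/
theorem shy_iff_measure_zero
    {X : Type*} [NormedAddCommGroup X] [NormedSpace ℝ X] [FiniteDimensional ℝ X]
    [MeasurableSpace X] [BorelSpace X]
    (μ : Measure X) [μ.IsAddHaarMeasure]
    (S : Set X) (hS : MeasurableSet S) :
    Shy S ↔ μ S = 0 := by
  refine ⟨fun ⟨ν, ⟨U, _, hU_pos, hU_fin⟩, hν⟩ ↦ ?_, shy_of_measure_eq_zero μ⟩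
  have : IsFiniteMeasure (ν.restrict U) := isFiniteMeasure_restrict.2 hU_fin.ne
  exact measure_eq_zero_of_forall_measure_image_add_left_eq_zero μ (ν.restrict U)
    (restrict_eq_zero.not.2 hU_pos.ne') hS
    fun x ↦ nonpos_iff_eq_zero.1 ((restrict_le_self _).trans (hν x).le)
end
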